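/- Let C(U), C(X), C(Z) be pretriangulated categories related by gluing and equipped with weight structures compatible with the gluing. Then the restriction of j^* induces equivalences of categories j^* : C(X)_{w=0,i^*w≤−1} → C(U)_{w=0,∂w≠0} and j^* : C(X)_{w=0,i^!w≥1} → C(U)_{w=0,∂w≠1}. (Remark 0F (a).) -/

import Mathlib

set_option linter.unusedVariables false

open CategoryTheory Limits Pretriangulated

universe w₁ w₂ w₃ w₄ v₁ v₂ v₃ v₄ u₁ u₂ u₃ u₄

/-- A weight structure on a pretriangulated category `C`: a pair of classes of objects
`(C_{w≤0}, C_{w≥0})`, each containing the zero objects and closed under isomorphisms and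
retracts (direct summands), such that `C_{w≤0}[-1] ⊆ C_{w≤0}`, `C_{w≥0}[1] ⊆ C_{w≥0}`,
`Hom(A, B[1]) = 0` for `A ∈ C_{w≤0}`, `B ∈ C_{w≥0}`, and every object admits a weight
filtration. -/
structure WeightStructure (C : Type*) [Category C] [HasZeroObject C] [Preadditive C]
    [HasShift C ℤ] [∀ n : ℤ, (shiftFunctor C n).Additive] [Pretriangulated C] where
  le : C → Prop
  ge : C → Prop
  le_zero : ∀ X : C, IsZero X → le X
  ge_zero : ∀ X : C, IsZero X → ge X
  le_iso : ∀ {X Y : C}, (X ≅ Y) → le X → le Y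
  ge_iso : ∀ {X Y : C}, (X ≅ Y) → ge X → ge Y
  le_retract : ∀ {X Y : C} (s : X ⟶ Y) (r : Y ⟶ X), s ≫ r = 𝟙 X → le Y → le X
  ge_retract : ∀ {X Y : C} (s : X ⟶ Y) (r : Y ⟶ X), s ≫ r = 𝟙 X → ge Y → ge X
  le_shift : ∀ X : C, le X → le (X⟦(-1 : ℤ)⟧)
  ge_shift : ∀ X : C, ge X → ge (X⟦(1 : ℤ)⟧)
  orth : ∀ {A B : C} (f : A ⟶ B⟦(1 : ℤ)⟧), le A → ge B → f = 0
  exists_weight_filtration : ∀ M : C, ∃ (A B : C) (f : A ⟶ M) (g : M ⟶ B)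
    (h : B ⟶ A⟦(1 : ℤ)⟧), (Triangle.mk f g h ∈ distTriang C) ∧ le A ∧ ge (B⟦(-1 : ℤ)⟧)

namespace WeightStructure

variable {C : Type*} [Category C] [HasZeroObject C] [Preadditive C]
    [HasShift C ℤ] [∀ n : ℤ, (shiftFunctor C n).Additive] [Pretriangulated C]

/-- `X ∈ C_{w ≤ n}`, i.e. `X[-n] ∈ C_{w ≤ 0}`. -/
def leW (w : WeightStructure C) (n : ℤ) (X : C) : Prop := w.le (X⟦(-n : ℤ)⟧)

/-- `X ∈ C_{w ≥ n}`, i.e. `X[-n] ∈ C_{w ≥ 0}`. -/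
def geW (w : WeightStructure C) (n : ℤ) (X : C) : Prop := w.ge (X⟦(-n : ℤ)⟧)

/-- The heart `C_{w = 0}`. -/
def heart (w : WeightStructure C) (X : C) : Prop := w.le X ∧ w.ge X

/-- `M` is without weights `m, …, n`: there is a distinguished triangle
`M_{≤ m-1} → M → M_{≥ n+1} → M_{≤ m-1}[1]` with `M_{≤ m-1} ∈ C_{w ≤ m-1}` and
`M_{≥ n+1} ∈ C_{w ≥ n+1}` (a weight filtration avoiding weights `m, …, n`). -/
def WithoutWeights (w : WeightStructure C) (m n : ℤ) (M : C) : Prop :=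
  ∃ (A B : C) (f : A ⟶ M) (g : M ⟶ B) (h : B ⟶ A⟦(1 : ℤ)⟧),
    (Triangle.mk f g h ∈ distTriang C) ∧ w.leW (m - 1) A ∧ w.geW (n + 1) B

end WeightStructure

/-- A weight-exact (exact) functor between pretriangulated categories equipped with
weight structures: `F(C_{w≤0}) ⊆ D_{w≤0}` and `F(C_{w≥0}) ⊆ D_{w≥0}`. -/
def WeightExact {C : Type*} [Category C] [HasZeroObject C] [Preadditive C]
    [HasShift C ℤ] [∀ n : ℤ, (shiftFunctor C n).Additive] [Pretriangulated C]
    {D : Type*} [Category D] [HasZeroObject D] [Preadditive D]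
    [HasShift D ℤ] [∀ n : ℤ, (shiftFunctor D n).Additive] [Pretriangulated D]
    (wC : WeightStructure C) (wD : WeightStructure D) (F : C ⥤ D) : Prop :=
  (∀ X : C, wC.le X → wD.le (F.obj X)) ∧ (∀ X : C, wC.ge X → wD.ge (F.obj X))

variable {CU : Type*} [Category CU] [HasZeroObject CU] [Preadditive CU]
  [HasShift CU ℤ] [∀ n : ℤ, (shiftFunctor CU n).Additive] [Pretriangulated CU]
variable {CX : Type*} [Category CX] [HasZeroObject CX] [Preadditive CX]
  [HasShift CX ℤ] [∀ n : ℤ, (shiftFunctor CX n).Additive] [Pretriangulated CX]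
variable {CZ : Type*} [Category CZ] [HasZeroObject CZ] [Preadditive CZ]
  [HasShift CZ ℤ] [∀ n : ℤ, (shiftFunctor CZ n).Additive] [Pretriangulated CZ]

/- The six gluing functors: `jl = j_!`, `js = j^*`, `jr = j_*`,
   `il = i^*`, `im = i_*`, `ir = i^!`; all of them are exact. -/
variable (jl : CU ⥤ CX) (js : CX ⥤ CU) (jr : CU ⥤ CX)
  (il : CX ⥤ CZ) (im : CZ ⥤ CX) (ir : CX ⥤ CZ)
  [jl.CommShift ℤ] [jl.IsTriangulated] [js.CommShift ℤ] [js.IsTriangulated]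
  [jr.CommShift ℤ] [jr.IsTriangulated] [il.CommShift ℤ] [il.IsTriangulated]
  [im.CommShift ℤ] [im.IsTriangulated] [ir.CommShift ℤ] [ir.IsTriangulated]
  [im.Full] [im.Faithful]
variable (adj₁ : jl ⊣ js) (adj₂ : js ⊣ jr) (adj₃ : il ⊣ im) (adj₄ : im ⊣ ir)

/-- The axioms of a gluing ("recollement") situation relating `C(U)`, `C(X)` and `C(Z)`:
`j^* ∘ i_* = 0`, the unit `id → j^* j_!` and the counit `j^* j_* → id` are isomorphisms,
and the two localization triangles `j_! j^* M → M → i_* i^* M → (j_! j^* M)[1]` and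
`i_* i^! M → M → j_* j^* M → (i_* i^! M)[1]` are distinguished.
(Full faithfulness of `i_*` is part of the ambient variable context.) -/
structure IsGluing : Prop where
  js_im_zero : ∀ Z : CZ, IsZero (js.obj (im.obj Z))
  unit_iso : IsIso adj₁.unit
  counit_iso : IsIso adj₂.counit
  tri₁ : ∀ M : CX, ∃ δ : im.obj (il.obj M) ⟶ (jl.obj (js.obj M))⟦(1 : ℤ)⟧,
    Triangle.mk (adj₁.counit.app M) (adj₃.unit.app M) δ ∈ distTriang CX
  tri₂ : ∀ M : CX, ∃ δ : jr.obj (js.obj M) ⟶ (im.obj (ir.obj M))⟦(1 : ℤ)⟧,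
    Triangle.mk (adj₄.counit.app M) (adj₂.unit.app M) δ ∈ distTriang CX

variable (wU : WeightStructure CU) (wX : WeightStructure CX) (wZ : WeightStructure CZ)

/-- Compatibility of the weight structures on `C(U)`, `C(X)`, `C(Z)` with the gluing:
the left adjoints `j_!`, `j^*`, `i^*`, `i_*` respect `(w ≤ 0)`, and the right adjoints
`j^*`, `j_*`, `i_*`, `i^!` respect `(w ≥ 0)`. -/
structure GluedWeights : Prop where
  jl_le : ∀ X : CU, wU.le X → wX.le (jl.obj X)
  js_le : ∀ X : CX, wX.le X → wU.le (js.obj X)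
  js_ge : ∀ X : CX, wX.ge X → wU.ge (js.obj X)
  il_le : ∀ X : CX, wX.le X → wZ.le (il.obj X)
  im_le : ∀ X : CZ, wZ.le X → wX.le (im.obj X)
  im_ge : ∀ X : CZ, wZ.ge X → wX.ge (im.obj X)
  jr_ge : ∀ X : CU, wU.ge X → wX.ge (jr.obj X)
  ir_ge : ∀ X : CX, wX.ge X → wZ.ge (ir.obj X)

/-!
For `M` in the heart with `i^* M ∈ C(Z)_{w ≤ -1}` (resp. `i^! M ∈ C(Z)_{w ≥ 1}`), applying `i^*` to
the triangle `i_* i^! M → M → j_* j^* M` gives a weight filtration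
`i^* M → i^* j_* j^* M → (i^! M)[1]` avoiding weight `0` (resp. `1`). On these subcategories `j^*`
is fully faithful: `Hom(M, N) → Hom(M, j_* j^* N) ≅ Hom(j^* M, j^* N)` is bijective because
`Hom(M, i_* i^! N)` and `Hom(M, (i_* i^! N)[1])` vanish by adjunction and orthogonality (dually,
using `j_! j^* M → M → i_* i^* M`). Conversely, a weight filtration `A → i^* j_* M_U → B` avoiding
the weight glues to the fibre `M` of `j_* M_U → i_* B`, for which `j^* M ≅ M_U`, `i^* M ≅ A` and,
since `i^! j_* = 0`, `i^! M ≅ B[-1]`; `M` lies in the heart because `C(X)_{w ≤ 0}` and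
`C(X)_{w ≥ 0}` are closed under extensions.
-/

namespace WeightStructure

variable {C : Type*} [Category C] [HasZeroObject C] [Preadditive C]
    [HasShift C ℤ] [∀ n : ℤ, (shiftFunctor C n).Additive] [Pretriangulated C]
    (w : WeightStructure C)

lemma leW_of_iso {n : ℤ} {X Y : C} (e : X ≅ Y) (hX : w.leW n X) : w.leW n Y :=
  w.le_iso ((shiftFunctor C (-n)).mapIso e) hX

lemma geW_of_iso {n : ℤ} {X Y : C} (e : X ≅ Y) (hX : w.geW n X) : w.geW n Y :=
  w.ge_iso ((shiftFunctor C (-n)).mapIso e) hX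

lemma leW_zero_iff {X : C} : w.leW 0 X ↔ w.le X :=
  ⟨w.le_iso ((shiftFunctorZero' C (-0) neg_zero).app X),
    w.le_iso ((shiftFunctorZero' C (-0) neg_zero).app X).symm⟩

lemma geW_zero_iff {X : C} : w.geW 0 X ↔ w.ge X :=
  ⟨w.ge_iso ((shiftFunctorZero' C (-0) neg_zero).app X),
    w.ge_iso ((shiftFunctorZero' C (-0) neg_zero).app X).symm⟩

lemma leW_shift_iff (a n : ℤ) {X : C} : w.leW n (X⟦a⟧) ↔ w.leW (n - a) X := by
  let e := (shiftFunctorAdd' C a (-n) (-(n - a)) (by ring)).app X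
  exact ⟨w.le_iso e.symm, w.le_iso e⟩

lemma geW_shift_iff (a n : ℤ) {X : C} : w.geW n (X⟦a⟧) ↔ w.geW (n - a) X := by
  let e := (shiftFunctorAdd' C a (-n) (-(n - a)) (by ring)).app X
  exact ⟨w.ge_iso e.symm, w.ge_iso e⟩

lemma leW_mono {m n : ℤ} (hmn : m ≤ n) {X : C} (hX : w.leW m X) : w.leW n X := by
  induction n, hmn using Int.leInduction with
  | base => exact hX
  | succ n _ ih =>
    exact w.le_iso ((shiftFunctorAdd' C (-n) (-1) (-(n + 1)) (by ring)).app X).symm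
      (w.le_shift _ ih)

lemma geW_anti {m n : ℤ} (hmn : m ≤ n) {X : C} (hX : w.geW n X) : w.geW m X := by
  induction m, hmn using Int.leInductionDown with
  | base => exact hX
  | pred m _ ih =>
    exact w.ge_iso ((shiftFunctorAdd' C (-m) 1 (-(m - 1)) (by ring)).app X).symm
      (w.ge_shift _ ih)

lemma hom_eq_zero_of_leW_of_geW {m n : ℤ} (hmn : m < n) {A B : C} (hA : w.leW m A)
    (hB : w.geW n B) (f : A ⟶ B) : f = 0 := by
  have hB' : w.ge ((B⟦-m⟧)⟦(-1 : ℤ)⟧) :=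
    w.ge_iso ((shiftFunctorAdd' C (-m) (-1) (-(m + 1)) (by ring)).app B)
      (w.geW_anti (Int.add_one_le_of_lt hmn) hB)
  have hf : f⟦-m⟧' ≫ ((shiftFunctorCompIsoId C (-1 : ℤ) 1 (by norm_num)).app _).inv = 0 :=
    w.orth _ hA hB'
  rwa [Preadditive.IsIso.comp_right_eq_zero, Functor.map_eq_zero_iff] at hf

lemma geW_of_retract {n : ℤ} {X Y : C} (s : X ⟶ Y) (r : Y ⟶ X) (hsr : s ≫ r = 𝟙 X)
    (hY : w.geW n Y) : w.geW n X :=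
  w.ge_retract (s⟦-n⟧') (r⟦-n⟧')
    (by rw [← Functor.map_comp, hsr, (shiftFunctor C (-n)).map_id]) hY

lemma le_of_forall_hom_eq_zero {Y : C} (hY : ∀ (B : C) (f : Y ⟶ B), w.geW 1 B → f = 0) :
    w.le Y := by
  obtain ⟨A, B, f, g, h, hT, hA, hB⟩ := w.exists_weight_filtration Y
  obtain ⟨s, hs⟩ := Triangle.coyoneda_exact₂ _ hT (𝟙 Y) ((Category.id_comp g).trans (hY B g hB))
  exact w.le_retract s f hs.symm hA

lemma geW_one_of_forall_hom_eq_zero {Y : C} (hY : ∀ (A : C) (f : A ⟶ Y), w.le A → f = 0) :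
    w.geW 1 Y := by
  obtain ⟨A, B, f, g, h, hT, hA, hB⟩ := w.exists_weight_filtration Y
  obtain ⟨r, hr⟩ := Triangle.yoneda_exact₂ _ hT (𝟙 Y) ((Category.comp_id f).trans (hY A f hA))
  exact w.geW_of_retract g r hr.symm hB

lemma le_of_distTriang (T : Triangle C) (hT : T ∈ distTriang C) (h₁ : w.le T.obj₁)
    (h₃ : w.le T.obj₃) : w.le T.obj₂ := by
  refine w.le_of_forall_hom_eq_zero fun B f hB => ?_
  have hzero : ∀ {X : C}, w.le X → ∀ g : X ⟶ B, g = 0 := fun hX =>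
    w.hom_eq_zero_of_leW_of_geW zero_lt_one (w.leW_zero_iff.2 hX) hB
  obtain ⟨g, rfl⟩ := Triangle.yoneda_exact₂ T hT f (hzero h₁ _)
  rw [hzero h₃ g, comp_zero]

lemma geW_one_of_distTriang (T : Triangle C) (hT : T ∈ distTriang C) (h₁ : w.geW 1 T.obj₁)
    (h₃ : w.geW 1 T.obj₃) : w.geW 1 T.obj₂ := by
  refine w.geW_one_of_forall_hom_eq_zero fun A f hA => ?_
  have hzero : ∀ {X : C}, w.geW 1 X → ∀ g : A ⟶ X, g = 0 := fun hX =>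
    w.hom_eq_zero_of_leW_of_geW zero_lt_one (w.leW_zero_iff.2 hA) hX
  obtain ⟨g, rfl⟩ := Triangle.coyoneda_exact₂ T hT f (hzero h₃ _)
  rw [hzero h₁ g, zero_comp]

lemma ge_iff_geW_one_shift {X : C} : w.ge X ↔ w.geW 1 (X⟦(1 : ℤ)⟧) := by
  rw [geW_shift_iff, sub_self, geW_zero_iff]

lemma ge_of_distTriang (T : Triangle C) (hT : T ∈ distTriang C) (h₁ : w.ge T.obj₁)
    (h₃ : w.ge T.obj₃) : w.ge T.obj₂ := by
  rw [ge_iff_geW_one_shift] at h₁ h₃ ⊢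
  exact w.geW_one_of_distTriang _ (Triangle.shift_distinguished T hT 1) h₁ h₃

end WeightStructure

namespace CategoryTheory.Pretriangulated

variable {C : Type*} [Category C] [HasZeroObject C] [Preadditive C]
    [HasShift C ℤ] [∀ n : ℤ, (shiftFunctor C n).Additive] [Pretriangulated C]

lemma bijective_comp_mor₂ (T : Triangle C) (hT : T ∈ distTriang C) {X : C}
    (h₁ : ∀ f : X ⟶ T.obj₁, f = 0) (h₁' : ∀ f : X ⟶ T.obj₁⟦(1 : ℤ)⟧, f = 0) :
    Function.Bijective (fun f : X ⟶ T.obj₂ => f ≫ T.mor₂) := by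
  refine ⟨fun f f' hff' => ?_, fun k => ?_⟩
  · rw [← sub_eq_zero]
    obtain ⟨g, hg⟩ := T.coyoneda_exact₂ hT (f - f')
      (by simpa [Preadditive.sub_comp, sub_eq_zero] using hff')
    rw [hg, h₁ g, zero_comp]
  · obtain ⟨g, hg⟩ := T.coyoneda_exact₃ hT k (h₁' _)
    exact ⟨g, hg.symm⟩

lemma bijective_mor₁_comp (T : Triangle C) (hT : T ∈ distTriang C) {Y : C}
    (h₃ : ∀ f : T.obj₃ ⟶ Y, f = 0) (h₃' : ∀ f : T.obj₃⟦(-1 : ℤ)⟧ ⟶ Y, f = 0) :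
    Function.Bijective (fun f : T.obj₂ ⟶ Y => T.mor₁ ≫ f) := by
  refine ⟨fun f f' hff' => ?_, fun k => ?_⟩
  · rw [← sub_eq_zero]
    obtain ⟨g, hg⟩ := T.yoneda_exact₂ hT (f - f')
      (by simpa [Preadditive.comp_sub, sub_eq_zero] using hff')
    rw [hg, h₃ g, comp_zero]
  · obtain ⟨g, hg⟩ := T.invRotate.yoneda_exact₂ (inv_rot_of_distTriang T hT) k (h₃' _)
    exact ⟨g, hg.symm⟩

lemma nonempty_iso₁_of_iso₂₃ {T T' : Triangle C} (hT : T ∈ distTriang C)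
    (hT' : T' ∈ distTriang C) (e₂ : T.obj₂ ≅ T'.obj₂) (e₃ : T.obj₃ ≅ T'.obj₃)
    (comm : T.mor₂ ≫ e₃.hom = e₂.hom ≫ T'.mor₂) : Nonempty (T.obj₁ ≅ T'.obj₁) :=
  ⟨(shiftFunctor C (1 : ℤ)).preimageIso (Triangle.π₃.mapIso (isoTriangleOfIso₁₂ _ _
    (rot_of_distTriang _ hT) (rot_of_distTriang _ hT') e₂ e₃ comm))⟩

end CategoryTheory.Pretriangulated

lemma CategoryTheory.Adjunction.bijective_map_iff_comp_unit_app {C D : Type*} [Category C]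
    [Category D] {F : C ⥤ D} {G : D ⥤ C} (adj : F ⊣ G) (X Y : C) :
    Function.Bijective (F.map : (X ⟶ Y) → _) ↔
      Function.Bijective (fun f : X ⟶ Y => f ≫ adj.unit.app Y) := by
  have hcomp : (fun f : X ⟶ Y => f ≫ adj.unit.app Y) = adj.homEquiv X (F.obj Y) ∘ F.map := by
    ext f
    simp [Adjunction.homEquiv_unit]
  rw [hcomp, Function.Bijective.of_comp_iff' (adj.homEquiv X (F.obj Y)).bijective]

lemma CategoryTheory.Adjunction.bijective_map_iff_counit_app_comp {C D : Type*} [Category C]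
    [Category D] {F : C ⥤ D} {G : D ⥤ C} (adj : F ⊣ G) (X Y : D) :
    Function.Bijective (G.map : (X ⟶ Y) → _) ↔
      Function.Bijective (fun f : X ⟶ Y => adj.counit.app X ≫ f) := by
  have hcomp : (fun f : X ⟶ Y => adj.counit.app X ≫ f) =
      (adj.homEquiv (G.obj X) Y).symm ∘ G.map := by
    ext f
    simp [Adjunction.homEquiv_counit]
  rw [hcomp, Function.Bijective.of_comp_iff' (adj.homEquiv (G.obj X) Y).symm.bijective]

lemma CategoryTheory.ObjectProperty.isEquivalence_lift_ι_comp {C D : Type*} [Category C]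
    [Category D] {P : ObjectProperty C} {Q : ObjectProperty D} (F : C ⥤ D)
    (hPQ : ∀ X : P.FullSubcategory, Q ((P.ι ⋙ F).obj X))
    (hF : ∀ X Y : C, P X → P Y → Function.Bijective (F.map : (X ⟶ Y) → _))
    (hQ : ∀ Y : D, Q Y → ∃ X, P X ∧ Nonempty (F.obj X ≅ Y)) :
    (Q.lift (P.ι ⋙ F) hPQ).IsEquivalence := by
  obtain ⟨hPF⟩ := (Functor.FullyFaithful.nonempty_iff_map_bijective (P.ι ⋙ F)).2 fun X Y =>
    (hF X.obj Y.obj X.property Y.property).comp (P.fullyFaithfulι.map_bijective X Y)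
  have := hPF.full
  have := hPF.faithful
  refine { essSurj := ⟨fun Y => ?_⟩ }
  obtain ⟨X, hX, ⟨e⟩⟩ := hQ Y.obj Y.property
  exact ⟨⟨X, hX⟩, ⟨ObjectProperty.isoMk _ e⟩⟩

section Gluing

variable {CU CX CZ : Type*} [Category CU] [Category CX] [Category CZ]
  [HasZeroObject CX] [Preadditive CX] [HasShift CX ℤ] [∀ n : ℤ, (shiftFunctor CX n).Additive]
  [Pretriangulated CX]
  {jl : CU ⥤ CX} {js : CX ⥤ CU} {jr : CU ⥤ CX} {il : CX ⥤ CZ} {im : CZ ⥤ CX} {ir : CX ⥤ CZ}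
  {adj₁ : jl ⊣ js} {adj₂ : js ⊣ jr} {adj₃ : il ⊣ im} {adj₄ : im ⊣ ir}

namespace IsGluing

variable (hglue : IsGluing jl js jr il im ir adj₁ adj₂ adj₃ adj₄)
include hglue

lemma isZero_ir_obj_jr_obj [Preadditive CZ] (MU : CU) : IsZero (ir.obj (jr.obj MU)) := by
  rw [IsZero.iff_id_eq_zero]
  apply (adj₄.homEquiv _ _).symm.injective
  apply (adj₂.homEquiv _ _).symm.injective
  exact (hglue.js_im_zero _).eq_of_src _ _

variable [HasZeroObject CZ] [Preadditive CZ] [HasShift CZ ℤ]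
  [∀ n : ℤ, (shiftFunctor CZ n).Additive] [Pretriangulated CZ] {wZ : WeightStructure CZ}

lemma js_map_bijective_of_leW_il [il.Additive] [im.CommShift ℤ] {M N : CX}
    (hM : wZ.leW (-1) (il.obj M)) (hN : wZ.ge (ir.obj N)) :
    Function.Bijective (js.map : (M ⟶ N) → _) := by
  obtain ⟨δ, hT⟩ := hglue.tri₂ N
  have hzero : ∀ {n : ℤ} {Y : CZ}, 0 ≤ n → wZ.geW n Y → ∀ f : M ⟶ im.obj Y, f = 0 :=
    fun hn hY f => (AddEquiv.map_eq_zero_iff (adj₃.homAddEquiv _ _).symm).1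
      (wZ.hom_eq_zero_of_leW_of_geW (by omega) hM hY _)
  have hN₀ : wZ.geW 0 (ir.obj N) := wZ.geW_zero_iff.2 hN
  have hN₁ : wZ.geW 1 ((ir.obj N)⟦(1 : ℤ)⟧) := (wZ.geW_shift_iff 1 1).2 (by rwa [sub_self])
  refine (adj₂.bijective_map_iff_comp_unit_app M N).2
    (Pretriangulated.bijective_comp_mor₂ _ hT (hzero le_rfl hN₀) fun f => ?_)
  exact (cancel_mono ((im.commShiftIso (1 : ℤ)).app (ir.obj N)).inv).1
    ((hzero zero_le_one hN₁ _).trans zero_comp.symm)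

lemma js_map_bijective_of_geW_ir [im.Additive] [im.CommShift ℤ] {M N : CX}
    (hM : wZ.le (il.obj M)) (hN : wZ.geW 1 (ir.obj N)) :
    Function.Bijective (js.map : (M ⟶ N) → _) := by
  obtain ⟨δ, hT⟩ := hglue.tri₁ M
  have hzero : ∀ {n : ℤ} {X : CZ}, n ≤ 0 → wZ.leW n X → ∀ f : im.obj X ⟶ N, f = 0 :=
    fun hn hX f => (AddEquiv.map_eq_zero_iff (adj₄.homAddEquiv _ _)).1
      (wZ.hom_eq_zero_of_leW_of_geW (by omega) hX hN _)
  have hM₀ : wZ.leW 0 (il.obj M) := wZ.leW_zero_iff.2 hM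
  have hM₁ : wZ.leW (-1) ((il.obj M)⟦(-1 : ℤ)⟧) :=
    (wZ.leW_shift_iff (-1) (-1)).2 (by rwa [sub_self])
  refine (adj₁.bijective_map_iff_counit_app_comp M N).2
    (Pretriangulated.bijective_mor₁_comp _ hT (hzero le_rfl hM₀) fun f => ?_)
  exact (cancel_epi ((im.commShiftIso (-1 : ℤ)).app (il.obj M)).hom).1
    ((hzero (by norm_num) hM₁ _).trans comp_zero.symm)

lemma withoutWeights_il_jr_js [il.CommShift ℤ] [il.IsTriangulated] [im.Full] [im.Faithful]
    {m n : ℤ} {M : CX} (hM : wZ.leW (m - 1) (il.obj M)) (hN : wZ.geW n (ir.obj M)) :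
    wZ.WithoutWeights m n (il.obj (jr.obj (js.obj M))) := by
  obtain ⟨δ, hT⟩ := hglue.tri₂ M
  refine ⟨_, _, _, _, _, rot_of_distTriang _ (il.map_distinguished _ hT), hM, ?_⟩
  refine (wZ.geW_shift_iff 1 (n + 1)).2 ?_
  rw [add_sub_cancel_right]
  exact wZ.geW_of_iso (asIso (adj₃.counit.app (ir.obj M))).symm hN

variable [HasZeroObject CU] [Preadditive CU] [HasShift CU ℤ]
  [∀ n : ℤ, (shiftFunctor CU n).Additive] [Pretriangulated CU]
  {wU : WeightStructure CU} {wX : WeightStructure CX}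

lemma le_of_le_js_of_le_il (hw : GluedWeights jl js jr il im ir wU wX wZ) {M : CX}
    (hU : wU.le (js.obj M)) (hZ : wZ.le (il.obj M)) : wX.le M := by
  obtain ⟨δ, hT⟩ := hglue.tri₁ M
  exact wX.le_of_distTriang _ hT (hw.jl_le _ hU) (hw.im_le _ hZ)

lemma ge_of_ge_js_of_ge_ir (hw : GluedWeights jl js jr il im ir wU wX wZ) {M : CX}
    (hU : wU.ge (js.obj M)) (hZ : wZ.ge (ir.obj M)) : wX.ge M := by
  obtain ⟨δ, hT⟩ := hglue.tri₂ M
  exact wX.ge_of_distTriang _ hT (hw.im_ge _ hZ) (hw.jr_ge _ hU)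

variable [js.CommShift ℤ] [js.IsTriangulated] [il.CommShift ℤ] [il.IsTriangulated]
  [ir.CommShift ℤ] [ir.IsTriangulated] [im.Full] [im.Faithful]

lemma exists_js_il_ir_iso (MU : CU) {A B : CZ} {a : A ⟶ il.obj (jr.obj MU)}
    {g : il.obj (jr.obj MU) ⟶ B} {b : B ⟶ A⟦(1 : ℤ)⟧} (hT : Triangle.mk a g b ∈ distTriang CZ) :
    ∃ M : CX, Nonempty (js.obj M ≅ MU) ∧ Nonempty (il.obj M ≅ A) ∧
      Nonempty (ir.obj M ≅ B⟦(-1 : ℤ)⟧) := by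
  obtain ⟨M, α, θ, hTM⟩ :=
    distinguished_cocone_triangle₁ (adj₃.unit.app (jr.obj MU) ≫ im.map g)
  refine ⟨M, ?_, ?_, ?_⟩
  · have : IsIso (js.map α) :=
      (Triangle.isZero₃_iff_isIso₁ _ (js.map_distinguished _ hTM)).1 (hglue.js_im_zero B)
    have := hglue.counit_iso
    exact ⟨asIso (js.map α) ≪≫ asIso (adj₂.counit.app MU)⟩
  · refine Pretriangulated.nonempty_iso₁_of_iso₂₃ (il.map_distinguished _ hTM) hT (Iso.refl _)
      (asIso (adj₃.counit.app B) : il.obj (im.obj B) ≅ B) ?_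
    change il.map (adj₃.unit.app _ ≫ im.map g) ≫ _ = 𝟙 _ ≫ g
    simp
  · have hiso := (Triangle.isZero₃_iff_isIso₁ _
      (inv_rot_of_distTriang _ (ir.map_distinguished _ hTM))).1 (hglue.isZero_ir_obj_jr_obj MU)
    exact ⟨(@asIso _ _ _ _ _ hiso).symm ≪≫
      (shiftFunctor CZ (-1 : ℤ)).mapIso (asIso (adj₄.unit.app B)).symm⟩

variable (hw : GluedWeights jl js jr il im ir wU wX wZ)
include hw

lemma exists_heart_js_il_ir_iso {MU : CU} (hMU : wU.heart MU) {A B : CZ}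
    {a : A ⟶ il.obj (jr.obj MU)} {g : il.obj (jr.obj MU) ⟶ B} {b : B ⟶ A⟦(1 : ℤ)⟧}
    (hT : Triangle.mk a g b ∈ distTriang CZ) (hA : wZ.le A) (hB : wZ.geW 1 B) :
    ∃ M : CX, wX.heart M ∧ Nonempty (js.obj M ≅ MU) ∧ Nonempty (il.obj M ≅ A) ∧
      Nonempty (ir.obj M ≅ B⟦(-1 : ℤ)⟧) := by
  obtain ⟨M, ⟨e⟩, ⟨eA⟩, ⟨eB⟩⟩ := hglue.exists_js_il_ir_iso MU hT
  refine ⟨M, ⟨?_, ?_⟩, ⟨e⟩, ⟨eA⟩, ⟨eB⟩⟩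
  · exact hglue.le_of_le_js_of_le_il hw (wU.le_iso e.symm hMU.1) (wZ.le_iso eA.symm hA)
  · exact hglue.ge_of_ge_js_of_ge_ir hw (wU.ge_iso e.symm hMU.2) (wZ.ge_iso eB.symm hB)

lemma exists_leW_il_of_withoutWeights_zero {MU : CU}
    (hMU : wU.heart MU ∧ wZ.WithoutWeights 0 0 (il.obj (jr.obj MU))) :
    ∃ M : CX, (wX.heart M ∧ wZ.leW (-1) (il.obj M)) ∧ Nonempty (js.obj M ≅ MU) := by
  obtain ⟨hMU, A, B, a, g, b, hT, hA, hB⟩ := hMU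
  obtain ⟨M, hM, e, ⟨eA⟩, -⟩ := hglue.exists_heart_js_il_ir_iso hw hMU hT
    (wZ.leW_zero_iff.1 (wZ.leW_mono (by norm_num) hA)) hB
  exact ⟨M, ⟨hM, wZ.leW_of_iso eA.symm hA⟩, e⟩

lemma exists_geW_ir_of_withoutWeights_one {MU : CU}
    (hMU : wU.heart MU ∧ wZ.WithoutWeights 1 1 (il.obj (jr.obj MU))) :
    ∃ M : CX, (wX.heart M ∧ wZ.geW 1 (ir.obj M)) ∧ Nonempty (js.obj M ≅ MU) := by
  obtain ⟨hMU, A, B, a, g, b, hT, hA, hB⟩ := hMU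
  obtain ⟨M, hM, e, -, ⟨eB⟩⟩ := hglue.exists_heart_js_il_ir_iso hw hMU hT
    (wZ.leW_zero_iff.1 hA) (wZ.geW_anti (by norm_num) hB)
  exact ⟨M, ⟨hM, wZ.geW_of_iso eB.symm ((wZ.geW_shift_iff (-1) 1).2 hB)⟩, e⟩

end IsGluing

end Gluing

/-- **Remark 0F (a).** The restriction of `j^*` induces equivalences of categories
`C(X)_{w=0, i^*w ≤ -1} ≃ C(U)_{w=0, ∂w ≠ 0}` and
`C(X)_{w=0, i^!w ≥ 1} ≃ C(U)_{w=0, ∂w ≠ 1}`. -/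
theorem restriction_of_js_one_sided_equivalences
    (hglue : IsGluing jl js jr il im ir adj₁ adj₂ adj₃ adj₄)
    (hw : GluedWeights jl js jr il im ir wU wX wZ) :
    (∃ h : ∀ M : ObjectProperty.FullSubcategory (fun M : CX => wX.heart M ∧ wZ.leW (-1) (il.obj M)),
        wU.heart (js.obj M.obj) ∧ wZ.WithoutWeights 0 0 (il.obj (jr.obj (js.obj M.obj))),
      (ObjectProperty.lift
        (fun MU : CU => wU.heart MU ∧ wZ.WithoutWeights 0 0 (il.obj (jr.obj MU)))
        (ObjectProperty.ι
          (fun M : CX => wX.heart M ∧ wZ.leW (-1) (il.obj M)) ⋙ js)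
        h).IsEquivalence) ∧
    (∃ h : ∀ M : ObjectProperty.FullSubcategory (fun M : CX => wX.heart M ∧ wZ.geW 1 (ir.obj M)),
        wU.heart (js.obj M.obj) ∧ wZ.WithoutWeights 1 1 (il.obj (jr.obj (js.obj M.obj))),
      (ObjectProperty.lift
        (fun MU : CU => wU.heart MU ∧ wZ.WithoutWeights 1 1 (il.obj (jr.obj MU)))
        (ObjectProperty.ι
          (fun M : CX => wX.heart M ∧ wZ.geW 1 (ir.obj M)) ⋙ js)
        h).IsEquivalence) := by
  have heart_js : ∀ {M : CX}, wX.heart M → wU.heart (js.obj M) := fun hM =>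
    ⟨hw.js_le _ hM.1, hw.js_ge _ hM.2⟩
  refine ⟨⟨fun M => ⟨heart_js M.property.1, hglue.withoutWeights_il_jr_js M.property.2
      (wZ.geW_zero_iff.2 (hw.ir_ge _ M.property.1.2))⟩, ?_⟩,
    ⟨fun M => ⟨heart_js M.property.1, hglue.withoutWeights_il_jr_js
      (wZ.leW_zero_iff.2 (hw.il_le _ M.property.1.1)) M.property.2⟩, ?_⟩⟩
  · exact ObjectProperty.isEquivalence_lift_ι_comp js _
      (fun _ _ hM hN => hglue.js_map_bijective_of_leW_il hM.2 (hw.ir_ge _ hN.1.2))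
      (fun _ hMU => hglue.exists_leW_il_of_withoutWeights_zero hw hMU)
  · exact ObjectProperty.isEquivalence_lift_ι_comp js _
      (fun _ _ hM hN => hglue.js_map_bijective_of_geW_ir (hw.il_le _ hM.1.1) hN.2)
      (fun _ hMU => hglue.exists_geW_ir_of_withoutWeights_one hw hMU)
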